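/- arXiv:2310.11582 — 2 statements merged into one kernel-verified Lean document; each statement's English description precedes it below -/
import Mathlib

section
/- Let L₀ ⊆ L be first-order languages such that every symbol of L not in L₀ is a relation symbol. Let K be a λ-bounded strong Fraïssé class of L-structures whose class of reducts K↾L₀ is a strong Fraïssé class, and suppose K has the extended strong amalgamation property over L₀. Let M₀ be an L₀-structure satisfying the semantic λ-Fraïssé theory of K↾L₀. Then the set D_{A,B} is dense in the poset Fn_{M₀}(K, λ): for all A, B ∈ K[M₀] with A ⊆ B and every C ∈ K[M₀] with A ⊆ C, there exist C' ∈ K[M₀] with C ⊆ C' and a structure B* ∈ K[M₀] with A ⊆ B* ⊆ C' together with an isomorphism from B to B* fixing A pointwise. -/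
open FirstOrder FirstOrder.Language Set Cardinal

universe u

noncomputable section

/-- A condition over `M₀`: an `L`-structure whose reduct to `L₀` (along `φ : L₀ →ᴸ L`) is a
substructure of the `L₀`-structure `M₀`. -/
structure Cond {L₀ L : FirstOrder.Language.{u, u}} (φ : L₀ →ᴸ L) (M₀ : Type u)
    [L₀.Structure M₀] : Type u where
  carrier : L₀.Substructure M₀
  str : L.Structure carrier
  reduct_eq : @FirstOrder.Language.LHom.reduct L₀ L φ carrier str =
    FirstOrder.Language.Substructure.inducedStructure

variable {L₀ L : FirstOrder.Language.{u, u}} {φ : L₀ →ᴸ L} {M₀ : Type u} [L₀.Structure M₀]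

/-- The bundled `L`-structure underlying a condition. -/
def Cond.bundled (A : Cond φ M₀) : CategoryTheory.Bundled.{u} L.Structure :=
  ⟨A.carrier, A.str⟩

/-- `A` is a substructure of `B`: the inclusion of underlying sets is an `L`-embedding. -/
def Cond.le (A B : Cond φ M₀) : Prop :=
  ∃ f : @FirstOrder.Language.Embedding L A.carrier B.carrier A.str B.str,
    ∀ x : A.carrier, (f x : M₀) = (x : M₀)

/-- A strong Fraïssé class: closed under isomorphism, with the hereditary, joint embedding,
amalgamation, and strong (disjoint) amalgamation properties. -/
structure IsStrongFraisseClass {L' : FirstOrder.Language.{u, u}}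
    (K : Set (CategoryTheory.Bundled.{u} L'.Structure)) : Prop where
  isoClosed : ∀ A B : CategoryTheory.Bundled.{u} L'.Structure,
    Nonempty (A ≃[L'] B) → A ∈ K → B ∈ K
  hereditary : ∀ A : CategoryTheory.Bundled.{u} L'.Structure, A ∈ K →
    ∀ S : L'.Substructure A,
      (⟨(S : Type u), inferInstance⟩ : CategoryTheory.Bundled.{u} L'.Structure) ∈ K
  jep : ∀ A ∈ K, ∀ B ∈ K, ∃ C ∈ K, Nonempty (A ↪[L'] C) ∧ Nonempty (B ↪[L'] C)
  ap : ∀ (A B C : CategoryTheory.Bundled.{u} L'.Structure) (i₁ : A ↪[L'] B) (i₂ : A ↪[L'] C),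
    A ∈ K → B ∈ K → C ∈ K →
      ∃ (D : CategoryTheory.Bundled.{u} L'.Structure) (j₁ : B ↪[L'] D) (j₂ : C ↪[L'] D),
        D ∈ K ∧ j₁.comp i₁ = j₂.comp i₂
  sap : ∀ (A B C : CategoryTheory.Bundled.{u} L'.Structure) (i₁ : A ↪[L'] B) (i₂ : A ↪[L'] C),
    A ∈ K → B ∈ K → C ∈ K →
      ∃ (D : CategoryTheory.Bundled.{u} L'.Structure) (j₁ : B ↪[L'] D) (j₂ : C ↪[L'] D),
        D ∈ K ∧ j₁.comp i₁ = j₂.comp i₂ ∧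
          Set.range j₁ ∩ Set.range j₂ = Set.range (j₁.comp i₁)

/-- Every member of `K` is generated by a set of size `< λ` (`K` is `λ`-bounded). -/
def IsBounded {L' : FirstOrder.Language.{u, u}}
    (K : Set (CategoryTheory.Bundled.{u} L'.Structure)) (lam : Cardinal.{u}) : Prop :=
  ∀ A : CategoryTheory.Bundled.{u} L'.Structure, A ∈ K →
    ∃ s : Set A, #s < lam ∧ Substructure.closure L' s = ⊤

/-- The reduct of a bundled `L`-structure along `φ : L₀ →ᴸ L`. -/
def reductBundled (φ : L₀ →ᴸ L) (A : CategoryTheory.Bundled.{u} L.Structure) :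
    CategoryTheory.Bundled.{u} L₀.Structure :=
  ⟨A, @FirstOrder.Language.LHom.reduct L₀ L φ A A.str⟩

/-- The class of reducts (up to isomorphism) of members of `K`: `K↾L₀`. -/
def KBot (φ : L₀ →ᴸ L) (K : Set (CategoryTheory.Bundled.{u} L.Structure)) :
    Set (CategoryTheory.Bundled.{u} L₀.Structure) :=
  {X | ∃ A ∈ K, Nonempty (X ≃[L₀] reductBundled φ A)}

/-- `K` has the extended strong amalgamation property over `L₀`: any strong amalgamation
prescribed at the level of `L₀`-structures can be expanded to one in `K`. -/
def ExtendedSAP (φ : L₀ →ᴸ L) (K : Set (CategoryTheory.Bundled.{u} L.Structure)) : Prop :=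
  ∀ (D : Type u) [L₀.Structure D],
    (⟨D, inferInstance⟩ : CategoryTheory.Bundled.{u} L₀.Structure) ∈ KBot φ K →
    ∀ A B C : Cond φ D, A.bundled ∈ K → B.bundled ∈ K → C.bundled ∈ K →
      A.le B → A.le C →
      ((B.carrier : Set D) ∩ (C.carrier : Set D) = (A.carrier : Set D)) →
      Substructure.closure L₀ ((B.carrier : Set D) ∪ (C.carrier : Set D)) = ⊤ →
      ∃ D' : Cond φ D, D'.bundled ∈ K ∧ D'.carrier = ⊤ ∧ B.le D' ∧ C.le D'

/-- Every function symbol of `L` comes from `L₀`, i.e. `L ∖ L₀` is relational. -/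
def ComplementRelational (φ : L₀ →ᴸ L) : Prop :=
  ∀ n, Function.Surjective (fun f : L₀.Functions n => φ.onFunction f)

/-- Same quantifier-free type. -/
def SameQfType (L' : FirstOrder.Language.{u, u}) {ι : Type*} {M N : Type u}
    [L'.Structure M] [L'.Structure N] (a : ι → M) (b : ι → N) : Prop :=
  ∀ ψ : L'.Formula ι, ψ.IsQF → (ψ.Realize a ↔ ψ.Realize b)

/-- `M` satisfies the semantic `λ`-Fraïssé theory of a class `KB` of `L₀`-structures:
(1) every generating tuple (of size `< λ`) of a member of `KB` is realized in `M` up to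
quantifier-free type; (2) the corresponding extension property holds. -/
def SatisfiesFraisseTheory (KB : Set (CategoryTheory.Bundled.{u} L₀.Structure))
    (M : Type u) [L₀.Structure M] (lam : Cardinal.{u}) : Prop :=
  (∀ X : CategoryTheory.Bundled.{u} L₀.Structure, X ∈ KB →
    ∀ (ι : Type u), #ι < lam → ∀ x : ι → X,
      Substructure.closure L₀ (Set.range x) = ⊤ → ∃ c : ι → M, SameQfType L₀ x c) ∧
  (∀ Y : CategoryTheory.Bundled.{u} L₀.Structure, Y ∈ KB →
    ∀ (ι ι' : Type u), #ι < lam → #ι' < lam → ∀ (x : ι → Y) (y : ι' → Y),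
      (⟨((Substructure.closure L₀ (Set.range x) : L₀.Substructure Y) : Type u), inferInstance⟩ :
        CategoryTheory.Bundled.{u} L₀.Structure) ∈ KB →
      Substructure.closure L₀ (Set.range x ∪ Set.range y) = ⊤ →
      ∀ c : ι → M, SameQfType L₀ x c →
        ∃ d : ι' → M, SameQfType L₀ (Sum.elim x y) (Sum.elim c d))

/-!
Amalgamate `B` and `C` over `A` in `K`, cutting the amalgam `D` down to the substructure generated
by the two images. Its reduct lies in `K↾L₀` and is generated over the copy of `C` by fewer than
`λ` elements (the image of a generating set of `B`), and since `L ∖ L₀` is relational,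
`L₀`-generation and `L`-generation agree. So the extension property of `M₀`, applied to a
generating tuple of `C` and its own realization in `M₀`, embeds the reduct of `D` into `M₀`
fixing `C`. Transporting the `L`-structure of `D` along this embedding gives `C'`, and the image
of `B` is `B*`.
-/

namespace FirstOrder.Language

theorem Equiv.inducedStructure_eq {L' : Language} {M N : Type*} [L'.Structure M]
    [iN : L'.Structure N] (e : M ≃[L'] N) : e.toEquiv.inducedStructure = iN := by
  ext n f x
  · exact (e.map_fun f _).trans (congrArg _ (funext fun i => e.apply_symm_apply (x i)))
  · exact (e.map_rel f _).symm.trans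
      (iff_of_eq (congrArg _ (funext fun i => e.apply_symm_apply (x i))))

theorem Substructure.closure_range_comp_eq_range {L' : Language} {M N : Type*} [L'.Structure M]
    [L'.Structure N] {ι : Type*} {v : ι → M} (hv : closure L' (range v) = ⊤) (g : M →[L'] N) :
    closure L' (range (g ∘ v)) = g.range := by
  rw [range_comp, closure_image, hv, Hom.range_eq_map]

end FirstOrder.Language

open FirstOrder.Language.Substructure

section SameQfType

variable {L' : FirstOrder.Language.{u, u}} {P Q : Type u} [L'.Structure P] [L'.Structure Q]
  {ι : Type u} {a : ι → P} {b : ι → Q}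

theorem sameQfType_comp_embedding {Q' : Type u} [L'.Structure Q'] (e : P ↪[L'] Q)
    (e' : P ↪[L'] Q') (v : ι → P) : SameQfType L' (e ∘ v) (e' ∘ v) := by
  intro ψ hψ
  have realize_comp : ∀ {R : Type u} [L'.Structure R] (g : P ↪[L'] R),
      ψ.Realize (g ∘ v) ↔ ψ.Realize v := fun g => by
    unfold Formula.Realize
    simpa only [Subsingleton.elim (g ∘ default) default] using
      hψ.realize_embedding g (v := v) (xs := default)
  exact (realize_comp e).trans (realize_comp e').symm

theorem SameQfType.realize_term_eq_iff (hs : SameQfType L' a b) (t t' : L'.Term ι) :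
    t.realize a = t'.realize a ↔ t.realize b = t'.realize b := by
  simpa only [Formula.realize_equal] using hs (t.equal t') (BoundedFormula.IsAtomic.equal _ _).isQF

theorem SameQfType.relMap_realize_iff (hs : SameQfType L' a b) {n : ℕ} (R : L'.Relations n)
    (ts : Fin n → L'.Term ι) :
    Structure.RelMap R (fun i => (ts i).realize a) ↔
      Structure.RelMap R (fun i => (ts i).realize b) := by
  simpa only [Formula.realize_rel] using hs (R.formula ts) (BoundedFormula.IsAtomic.rel R _).isQF

theorem exists_term_realize_eq_of_closure_eq_top (hgen : closure L' (range a) = ⊤) (m : P) :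
    ∃ t : L'.Term ι, t.realize a = m := by
  obtain ⟨t, rfl⟩ := mem_closure_iff_exists_term.1 (hgen ▸ mem_top m)
  exact ⟨t.relabel (rangeSplitting a), by rw [Term.realize_relabel, comp_rangeSplitting]⟩

/-- A generated structure embeds wherever the quantifier-free type of its generators is realized:
send the value of a term at `a` to its value at `b`. -/
theorem SameQfType.exists_embedding (hs : SameQfType L' a b) (hgen : closure L' (range a) = ⊤) :
    ∃ h : P ↪[L'] Q, ∀ i, h (a i) = b i := by
  choose T hT using exists_term_realize_eq_of_closure_eq_top hgen
  have realize_T : ∀ t : L'.Term ι, (T (t.realize a)).realize b = t.realize b := fun t =>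
    (hs.realize_term_eq_iff _ t).1 (hT _)
  refine ⟨⟨⟨fun m => (T m).realize b, ?_⟩, fun {n} f ms => ?_, fun {n} R ms => ?_⟩,
    fun i => realize_T (Term.var i)⟩
  · intro m m' hm
    rw [← hT m, ← hT m']
    exact (hs.realize_term_eq_iff _ _).2 hm
  · have : Structure.funMap f ms = (Term.func f fun i => T (ms i)).realize a := by
      simp only [Term.realize_func, hT]
    rw [this]
    exact realize_T _
  · conv_rhs => rw [show ms = fun i => (T (ms i)).realize a from funext fun i => (hT _).symm]
    exact (hs.relMap_realize_iff R _).symm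

end SameQfType

namespace FirstOrder.Language.LHom

def reductEmbedding (φ : L₀ →ᴸ L) {M N : Type*} [L.Structure M] [L.Structure N]
    (g : M ↪[L] N) : @Embedding L₀ M N (φ.reduct M) (φ.reduct N) :=
  @Embedding.mk L₀ M N (φ.reduct M) (φ.reduct N) g.toEmbedding
    (fun f x => g.map_fun (φ.onFunction f) x) (fun r x => g.map_rel (φ.onRelation r) x)

end FirstOrder.Language.LHom

namespace ComplementRelational

variable (hrel : ComplementRelational φ) {P : Type*} [L.Structure P]
include hrel

theorem coe_closure_reduct (s : Set P) :
    (@closure L₀ P (φ.reduct P) s : Set P) = closure L s := by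
  let _ : L₀.Structure P := φ.reduct P
  refine subset_antisymm
    ((closure_le (S := φ.substructureReduct (closure L s))).2 subset_closure) ?_
  let S : L.Substructure P := ⟨closure L₀ s, fun {n} f => by
    obtain ⟨f₀, rfl⟩ := hrel n f
    exact (closure L₀ s).fun_mem f₀⟩
  exact (closure_le (S := S)).2 subset_closure

theorem closure_reduct_eq_top {s : Set P} (hs : closure L s = ⊤) :
    @closure L₀ P (φ.reduct P) s = ⊤ :=
  SetLike.ext' ((hrel.coe_closure_reduct s).trans (congrArg SetLike.coe hs))

end ComplementRelational

namespace Cond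

def subtypeReduct (C : Cond φ M₀) : @Embedding L₀ C.bundled M₀ (φ.reduct C.bundled) _ :=
  @Embedding.mk L₀ C.carrier M₀ (@LHom.reduct L₀ L φ C.carrier C.str) _
    (Function.Embedding.subtype _) (by intro n f x; rw [C.reduct_eq]; rfl)
    (by intro n r x; rw [C.reduct_eq]; rfl)

variable {N : Type u} [L.Structure N]

/-- The image of an embedding of the reduct of `N`, with the `L`-structure transported from `N`. -/
def ofEmbedding (h : @Embedding L₀ N M₀ (φ.reduct N) _) : Cond φ M₀ :=
  letI := φ.reduct N
  { carrier := h.toHom.range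
    str := h.equivRange.toEquiv.inducedStructure
    reduct_eq := h.equivRange.inducedStructure_eq }

def equivOfEmbedding (h : @Embedding L₀ N M₀ (φ.reduct N) _) :
    @Language.Equiv L N (ofEmbedding h).carrier _ (ofEmbedding h).str :=
  letI := φ.reduct N
  h.equivRange.toEquiv.inducedStructureEquiv

@[simp]
theorem coe_equivOfEmbedding (h : @Embedding L₀ N M₀ (φ.reduct N) _) (x : N) :
    ((equivOfEmbedding h x : (ofEmbedding h).carrier) : M₀) = h x :=
  rfl

theorem le_ofEmbedding {P : Cond φ M₀} (h : @Embedding L₀ N M₀ (φ.reduct N) _)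
    (e : P.bundled ↪[L] N) (he : ∀ x : P.carrier, h (e x) = x) : P.le (ofEmbedding h) :=
  letI := P.str
  letI := (ofEmbedding h).str
  ⟨(equivOfEmbedding h).toEmbedding.comp e, he⟩

end Cond

theorem IsStrongFraisseClass.exists_amalgam_range_sup_range_eq_top
    {L' : FirstOrder.Language.{u, u}} {K : Set (CategoryTheory.Bundled.{u} L'.Structure)}
    (hK : IsStrongFraisseClass K)
    {A B C : CategoryTheory.Bundled.{u} L'.Structure} (f : A ↪[L'] B) (g : A ↪[L'] C)
    (hA : A ∈ K) (hB : B ∈ K) (hC : C ∈ K) :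
    ∃ (D : CategoryTheory.Bundled.{u} L'.Structure) (j₁ : B ↪[L'] D) (j₂ : C ↪[L'] D),
      D ∈ K ∧ j₁.comp f = j₂.comp g ∧ j₁.toHom.range ⊔ j₂.toHom.range = ⊤ := by
  obtain ⟨D, j₁, j₂, hD, hcomm⟩ := hK.ap A B C f g hA hB hC
  set S := j₁.toHom.range ⊔ j₂.toHom.range
  have mem₁ : ∀ b, j₁ b ∈ S := fun b => le_sup_left (a := j₁.toHom.range) (Hom.mem_range_self _ b)
  have mem₂ : ∀ c, j₂ c ∈ S := fun c => le_sup_right (a := j₁.toHom.range) (Hom.mem_range_self _ c)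
  refine ⟨⟨S, inferInstance⟩, j₁.codRestrict S mem₁, j₂.codRestrict S mem₂, hK.hereditary D hD S,
    Embedding.ext fun a => Subtype.ext (DFunLike.congr_fun hcomm a), ?_⟩
  apply map_injective_of_injective (f := S.subtype.toHom) (subtype_injective S)
  rw [Substructure.map_sup, ← Hom.range_comp, ← Hom.range_comp, ← Hom.range_eq_map, range_subtype]
  rfl

theorem SatisfiesFraisseTheory.exists_embedding
    {KB : Set (CategoryTheory.Bundled.{u} L₀.Structure)} {M : Type u} [L₀.Structure M]
    {lam : Cardinal.{u}} (hM : SatisfiesFraisseTheory KB M lam) {Y : Type u} [L₀.Structure Y]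
    (hY : (⟨Y, inferInstance⟩ : CategoryTheory.Bundled.{u} L₀.Structure) ∈ KB)
    {ι ι' : Type u} (hι : #ι < lam) (hι' : #ι' < lam) (x : ι → Y) (y : ι' → Y)
    (hx : (⟨closure L₀ (range x), inferInstance⟩ : CategoryTheory.Bundled.{u} L₀.Structure) ∈ KB)
    (hgen : closure L₀ (range x ∪ range y) = ⊤) {c : ι → M} (hc : SameQfType L₀ x c) :
    ∃ h : Y ↪[L₀] M, ∀ i, h (x i) = c i := by
  obtain ⟨d, hd⟩ := hM.2 ⟨Y, inferInstance⟩ hY ι ι' hι hι' x y hx hgen c hc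
  obtain ⟨h, hh⟩ := hd.exists_embedding (by rwa [Sum.elim_range])
  exact ⟨h, fun i => hh (Sum.inl i)⟩

theorem SatisfiesFraisseTheory.exists_reductEmbedding_extending {lam : Cardinal.{u}}
    {K : Set (CategoryTheory.Bundled.{u} L.Structure)}
    (hM₀ : SatisfiesFraisseTheory (KBot φ K) M₀ lam) (hrel : ComplementRelational φ)
    (hbdd : IsBounded K lam) {C : Cond φ M₀} (hC : C.bundled ∈ K)
    {D : CategoryTheory.Bundled.{u} L.Structure} (hD : D ∈ K) (j : C.bundled ↪[L] D)
    {s : Set D} (hs : #s < lam) (hgen : j.toHom.range ⊔ closure L s = ⊤) :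
    ∃ h : @Embedding L₀ D M₀ (φ.reduct D) _, ∀ c : C.carrier, h (j c) = c := by
  obtain ⟨t, ht, htgen⟩ := hbdd C.bundled hC
  let _ : L₀.Structure D := φ.reduct D
  let _ : L₀.Structure C.bundled := φ.reduct C.bundled
  let x : t → D := fun i => j i
  have hx : closure L (range x) = j.toHom.range :=
    closure_range_comp_eq_range (by rwa [Subtype.range_coe]) j.toHom
  have hx₀ : closure L₀ (range x) = (φ.reductEmbedding j).toHom.range :=
    SetLike.ext' ((hrel.coe_closure_reduct _).trans (congrArg SetLike.coe hx))
  have hxK : (⟨closure L₀ (range x), inferInstance⟩ : CategoryTheory.Bundled.{u} L₀.Structure)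
      ∈ KBot φ K := by
    rw [hx₀]
    exact ⟨C.bundled, hC, ⟨(φ.reductEmbedding j).equivRange.symm⟩⟩
  have hgen₀ : closure L₀ (range x ∪ range ((↑) : s → D)) = ⊤ :=
    hrel.closure_reduct_eq_top (by rwa [Substructure.closure_union, hx, Subtype.range_coe])
  obtain ⟨h, hh⟩ := hM₀.exists_embedding ⟨D, hD, ⟨Language.Equiv.refl L₀ D⟩⟩ ht hs x (↑) hxK hgen₀
    (sameQfType_comp_embedding (φ.reductEmbedding j) C.subtypeReduct _)
  have hfix : h.toHom.comp (φ.reductEmbedding j).toHom = C.subtypeReduct.toHom :=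
    Hom.eq_of_eqOn_dense (hrel.closure_reduct_eq_top htgen) fun c hc => hh ⟨c, hc⟩
  exact ⟨h, fun c => DFunLike.congr_fun hfix c⟩

theorem copy_of_extension_dense_general {L₀ L : FirstOrder.Language.{u, u}} (φ : L₀ →ᴸ L)
    (hrel : ComplementRelational φ)
    (lam : Cardinal.{u})
    (K : Set (CategoryTheory.Bundled.{u} L.Structure))
    (hK : IsStrongFraisseClass K) (hbdd : IsBounded K lam)
    (M₀ : Type u) [L₀.Structure M₀]
    (hM₀ : SatisfiesFraisseTheory (KBot φ K) M₀ lam)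
    (A B C : Cond φ M₀)
    (hA : A.bundled ∈ K) (hB : B.bundled ∈ K) (hC : C.bundled ∈ K)
    (hAB : A.le B) (hAC : A.le C) :
    ∃ C' : Cond φ M₀, C'.bundled ∈ K ∧ C.le C' ∧
      ∃ Bs : Cond φ M₀, Bs.bundled ∈ K ∧ A.le Bs ∧ Bs.le C' ∧
        ∃ e : @FirstOrder.Language.Equiv L B.carrier Bs.carrier B.str Bs.str,
          ∀ x : B.carrier, (x : M₀) ∈ (A.carrier : Set M₀) → ((e x : Bs.carrier) : M₀) = (x : M₀) := by
  obtain ⟨f, hf⟩ := hAB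
  obtain ⟨g, hg⟩ := hAC
  obtain ⟨D, j₁, j₂, hD, hcomm, hgen⟩ := hK.exists_amalgam_range_sup_range_eq_top f g hA hB hC
  obtain ⟨sB, hsB, hsBgen⟩ := hbdd B.bundled hB
  obtain ⟨h, hh⟩ := hM₀.exists_reductEmbedding_extending hrel hbdd hC hD j₂
    (s := j₁.toHom '' sB) (mk_image_le.trans_lt hsB)
    (by rwa [closure_image, hsBgen, ← Hom.range_eq_map, sup_comm])
  let _ : L₀.Structure D := φ.reduct D
  let _ : L₀.Structure B.bundled := φ.reduct B.bundled
  let k := h.comp (φ.reductEmbedding j₁)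
  have hk : ∀ a : A.carrier, k (f a) = a := fun a =>
    (congrArg h (DFunLike.congr_fun hcomm a) : h (j₁ (f a)) = h (j₂ (g a))).trans
      ((hh (g a)).trans (hg a))
  let _ := (Cond.ofEmbedding k).str
  let eB := Cond.equivOfEmbedding k
  refine ⟨Cond.ofEmbedding h, hK.isoClosed _ _ ⟨Cond.equivOfEmbedding h⟩ hD,
    Cond.le_ofEmbedding h j₂ hh, Cond.ofEmbedding k, hK.isoClosed _ _ ⟨eB⟩ hB,
    Cond.le_ofEmbedding k f hk, Cond.le_ofEmbedding h (j₁.comp eB.symm.toEmbedding) fun b => ?_,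
    eB, fun b hb => ?_⟩
  · exact (Cond.coe_equivOfEmbedding k _).symm.trans
      (congrArg Subtype.val (eB.apply_symm_apply b))
  · exact (congrArg k (Subtype.ext (hf ⟨b, hb⟩))).symm.trans (hk ⟨b, hb⟩)

/-- If `K` is a `λ`-bounded strong Fraïssé class with `K↾L₀` strong Fraïssé
and the extended strong amalgamation property over `L₀`, and `M₀` satisfies the semantic
`λ`-Fraïssé theory of `K↾L₀`, then the sets `D_{A,B}` are dense in `Fn_{M₀}(K, λ)`: for all
`A ⊆ B` in `K[M₀]` and every `C ∈ K[M₀]` with `A ⊆ C` there are `C' ⊇ C` in `K[M₀]` and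
`B*` with `A ⊆ B* ⊆ C'` isomorphic to `B` over `A`. -/
theorem copy_of_extension_dense {L₀ L : FirstOrder.Language.{u, u}} (φ : L₀ →ᴸ L)
    (hsub : φ.Injective) (hrel : ComplementRelational φ)
    (lam : Cardinal.{u})
    (K : Set (CategoryTheory.Bundled.{u} L.Structure))
    (hK : IsStrongFraisseClass K) (hbdd : IsBounded K lam)
    (hKbot : IsStrongFraisseClass (KBot φ K))
    (hesap : ExtendedSAP φ K)
    (M₀ : Type u) [L₀.Structure M₀]
    (hM₀ : SatisfiesFraisseTheory (KBot φ K) M₀ lam)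
    (A B C : Cond φ M₀)
    (hA : A.bundled ∈ K) (hB : B.bundled ∈ K) (hC : C.bundled ∈ K)
    (hAB : A.le B) (hAC : A.le C) :
    ∃ C' : Cond φ M₀, C'.bundled ∈ K ∧ C.le C' ∧
      ∃ Bs : Cond φ M₀, Bs.bundled ∈ K ∧ A.le Bs ∧ Bs.le C' ∧
        ∃ e : @FirstOrder.Language.Equiv L B.carrier Bs.carrier B.str Bs.str,
          ∀ x : B.carrier, (x : M₀) ∈ (A.carrier : Set M₀) → ((e x : Bs.carrier) : M₀) = (x : M₀) :=
  copy_of_extension_dense_general φ hrel lam K hK hbdd M₀ hM₀ A B C hA hB hC hAB hAC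

end
end

section
/- Let L₀ ⊆ L be first-order languages such that every symbol of L not in L₀ is a relation symbol. Let K be a λ-bounded strong Fraïssé class of L-structures whose class of reducts K↾L₀ is a strong Fraïssé class, and suppose K has the extended strong amalgamation property over L₀. Let M₀ be an L₀-structure satisfying the semantic λ-Fraïssé theory of K↾L₀. Then for every A ∈ K, the set D_A = {B ∈ K[M₀] : A embeds into B} is dense in the poset Fn_{M₀}(K, λ): for every C ∈ K[M₀] there is B ∈ K[M₀] with C ⊆ B and an embedding of A into B. -/
open FirstOrder FirstOrder.Language Set Cardinal

universe u

noncomputable section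

variable {L₀ L : FirstOrder.Language.{u, u}} {φ : L₀ →ᴸ L} {M₀ : Type u} [L₀.Structure M₀]

/-!
Embed `C` and `A` jointly into some `E ∈ K`. As `L ∖ L₀` is relational, small generating sets
of `C` and `E` also generate their `L₀`-reducts, so the extension property of `M₀` extends the
inclusion `C ⊆ M₀` to an `L₀`-embedding of `E` into `M₀`. Its image, carrying the `L`-structure
of `E`, is the required condition `B`.
-/

namespace SameQfType

variable {L' : FirstOrder.Language.{u, u}} {ι : Type*} {M N P : Type u}
  [L'.Structure M] [L'.Structure N] [L'.Structure P]

theorem embedding_comp (f : M ↪[L'] N) (g : M ↪[L'] P) (a : ι → M) :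
    SameQfType L' (f ∘ a) (g ∘ a) := fun ψ hψ => by
  have hf := hψ.realize_embedding f (v := a) (xs := default)
  have hg := hψ.realize_embedding g (v := a) (xs := default)
  rw [Subsingleton.elim (f ∘ default) default] at hf
  rw [Subsingleton.elim (g ∘ default) default] at hg
  exact hf.trans hg.symm

variable {a : ι → M} {b : ι → N}

theorem realize_term_eq_iff_s10 (h : SameQfType L' a b) (t₁ t₂ : L'.Term ι) :
    t₁.realize a = t₂.realize a ↔ t₁.realize b = t₂.realize b := by
  simpa using h (t₁.equal t₂) (BoundedFormula.IsAtomic.equal _ _).isQF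

theorem exists_term_realize_eq (hgen : Substructure.closure L' (Set.range a) = ⊤) (x : M) :
    ∃ t : L'.Term ι, t.realize a = x := by
  obtain ⟨t, rfl⟩ := Substructure.mem_closure_iff_exists_term.1 (hgen ▸ Substructure.mem_top x)
  refine ⟨t.relabel fun s => s.2.choose, ?_⟩
  rw [Term.realize_relabel]
  exact congrArg t.realize (funext fun s => s.2.choose_spec)

/-- Each element is the value of a term in the generators, and equalities and relations between
such values are quantifier-free facts about the tuple. -/
theorem exists_embedding_s10 (h : SameQfType L' a b)
    (hgen : Substructure.closure L' (Set.range a) = ⊤) :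
    ∃ g : M ↪[L'] N, ∀ i, g (a i) = b i := by
  choose T hT using exists_term_realize_eq hgen
  have hTb (t : L'.Term ι) : (T (t.realize a)).realize b = t.realize b :=
    (h.realize_term_eq_iff_s10 _ t).1 (hT _)
  refine ⟨⟨⟨fun x => (T x).realize b, fun x y hxy => ?_⟩, fun f xs => ?_, fun r xs => ?_⟩,
    fun i => hTb (Term.var i)⟩
  · rw [← hT x, ← hT y]
    exact (h.realize_term_eq_iff_s10 (T x) (T y)).2 hxy
  · have hfun : Structure.funMap f xs = (Term.func f fun i => T (xs i)).realize a := by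
      simp [hT]
    simp only [hfun, hTb]
    rfl
  · have := h (r.formula fun i => T (xs i)) (BoundedFormula.IsAtomic.rel _ _).isQF
    simp only [Formula.realize_rel, hT] at this
    exact this.symm

end SameQfType

theorem SatisfiesFraisseTheory.exists_embedding_extension
    {KB : Set (CategoryTheory.Bundled.{u} L₀.Structure)} {lam : Cardinal.{u}}
    (hM₀ : SatisfiesFraisseTheory KB M₀ lam)
    (hKB : ∀ X Y : CategoryTheory.Bundled.{u} L₀.Structure, Nonempty (X ≃[L₀] Y) → X ∈ KB → Y ∈ KB)
    {X Y : CategoryTheory.Bundled.{u} L₀.Structure} (hX : X ∈ KB) (hY : Y ∈ KB)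
    {s : Set X} (hs : #s < lam) (hsX : Substructure.closure L₀ s = ⊤)
    {t : Set Y} (ht : #t < lam) (htY : Substructure.closure L₀ t = ⊤)
    (f : X ↪[L₀] Y) (j : X ↪[L₀] M₀) :
    ∃ h : Y ↪[L₀] M₀, ∀ x, h (f x) = j x := by
  let x : s → Y := f ∘ (↑)
  let y : t → Y := (↑)
  have hx : Substructure.closure L₀ (Set.range x) = f.toHom.range := by
    rw [Set.range_comp, Subtype.range_coe, ← Embedding.coe_toHom, Substructure.closure_image,
      hsX, Hom.range_eq_map]
  have hxKB : (⟨Substructure.closure L₀ (Set.range x), inferInstance⟩ :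
      CategoryTheory.Bundled.{u} L₀.Structure) ∈ KB := by
    rw [hx]
    exact hKB _ _ ⟨f.equivRange⟩ hX
  have hxy : Substructure.closure L₀ (Set.range x ∪ Set.range y) = ⊤ :=
    top_unique (htY ▸ Substructure.closure_mono (by simp [y]))
  obtain ⟨d, hd⟩ := hM₀.2 Y hY s t hs ht x y hxKB hxy (j ∘ (↑))
    (SameQfType.embedding_comp f j _)
  obtain ⟨h, hh⟩ := hd.exists_embedding_s10 (by rwa [Set.Sum.elim_range])
  refine ⟨h, fun v => DFunLike.congr_fun (?_ : h.toHom.comp f.toHom = j.toHom) v⟩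
  exact Hom.eq_of_eqOn_dense hsX fun v hv => hh (Sum.inl ⟨v, hv⟩)

def FirstOrder.Language.Embedding.reduct (φ : L₀ →ᴸ L) {M N : Type u} [L.Structure M]
    [L.Structure N] (f : M ↪[L] N) : @Embedding L₀ M N (φ.reduct M) (φ.reduct N) :=
  letI := φ.reduct M; letI := φ.reduct N
  { toFun := f, inj' := f.injective,
    map_fun' := fun f₀ xs => f.map_fun (φ.onFunction f₀) xs,
    map_rel' := fun r xs => f.map_rel (φ.onRelation r) xs }

theorem closure_reduct_eq_top (hrel : ComplementRelational φ) {N : Type u} [L.Structure N]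
    {s : Set N} (hs : Substructure.closure L s = ⊤) :
    @Substructure.closure L₀ N (φ.reduct N) s = ⊤ := by
  let := φ.reduct N
  let S : L.Substructure N :=
    { carrier := Substructure.closure L₀ s
      fun_mem := fun f => by
        obtain ⟨f₀, rfl⟩ := hrel _ f
        exact (Substructure.closure L₀ s).fun_mem f₀ }
  have hS : S = ⊤ := top_unique (hs ▸ Substructure.closure_le.2 Substructure.subset_closure)
  exact eq_top_iff.2 fun x _ => (hS ▸ Substructure.mem_top x : x ∈ S)

theorem KBot.mem_of_equiv {K : Set (CategoryTheory.Bundled.{u} L.Structure)}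
    (X Y : CategoryTheory.Bundled.{u} L₀.Structure) : Nonempty (X ≃[L₀] Y) → X ∈ KBot φ K →
    Y ∈ KBot φ K := fun ⟨e⟩ ⟨A, hA, ⟨e'⟩⟩ => ⟨A, hA, ⟨e'.comp e.symm⟩⟩

theorem reductBundled_mem_KBot {K : Set (CategoryTheory.Bundled.{u} L.Structure)}
    {A : CategoryTheory.Bundled.{u} L.Structure} (hA : A ∈ K) : reductBundled φ A ∈ KBot φ K :=
  ⟨A, hA, ⟨.refl L₀ _⟩⟩

theorem exists_reduct_embedding_extension (hrel : ComplementRelational φ) {lam : Cardinal.{u}}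
    {K : Set (CategoryTheory.Bundled.{u} L.Structure)} (hbdd : IsBounded K lam)
    (hM₀ : SatisfiesFraisseTheory (KBot φ K) M₀ lam)
    {C E : CategoryTheory.Bundled.{u} L.Structure} (hC : C ∈ K) (hE : E ∈ K) (f : C ↪[L] E)
    (j : reductBundled φ C ↪[L₀] M₀) :
    ∃ h : reductBundled φ E ↪[L₀] M₀, ∀ x, h (f x) = j x := by
  obtain ⟨s, hs, hsC⟩ := hbdd C hC
  obtain ⟨t, ht, htE⟩ := hbdd E hE
  exact hM₀.exists_embedding_extension KBot.mem_of_equiv (reductBundled_mem_KBot hC)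
    (reductBundled_mem_KBot hE) hs (closure_reduct_eq_top (N := C) hrel hsC) ht
    (closure_reduct_eq_top (N := E) hrel htE) (Embedding.reduct φ (M := C) (N := E) f) j

theorem FirstOrder.Language.Equiv.inducedStructure_toEquiv {L' : FirstOrder.Language.{u, u}}
    {P Q : Type u} [L'.Structure P] [iQ : L'.Structure Q] (q : P ≃[L'] Q) :
    Equiv.inducedStructure q.toEquiv = iQ := by
  ext n f xs
  · change q (Structure.funMap f (q.symm ∘ xs)) = Structure.funMap f xs
    rw [q.map_fun]
    simp only [Function.comp_def, q.apply_symm_apply]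
  · change Structure.RelMap f (q.symm ∘ xs) ↔ Structure.RelMap f xs
    rw [← q.map_rel]
    simp only [Function.comp_def, q.apply_symm_apply]

namespace Cond

theorem exists_reduct_subtype (C : Cond φ M₀) :
    ∃ j : reductBundled φ C.bundled ↪[L₀] M₀, ∀ v : C.carrier, j v = v := by
  suffices ∃ j : @Embedding L₀ C.carrier M₀ (@LHom.reduct L₀ L φ C.carrier C.str) _,
      ∀ v, j v = v from this
  rw [C.reduct_eq]
  exact ⟨Substructure.subtype _, fun _ => rfl⟩

variable {E : CategoryTheory.Bundled.{u} L.Structure} (h : reductBundled φ E ↪[L₀] M₀)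

def ofReductEmbedding : Cond φ M₀ where
  carrier := h.toHom.range
  str := Equiv.inducedStructure (L := L) (M := E) h.equivRange.toEquiv
  reduct_eq := Equiv.inducedStructure_toEquiv h.equivRange

def equivOfReductEmbedding : E ≃[L] (ofReductEmbedding h).bundled :=
  Equiv.inducedStructureEquiv (L := L) (M := E) h.equivRange.toEquiv

theorem coe_equivOfReductEmbedding (x : E) :
    ((show h.toHom.range from equivOfReductEmbedding h x) : M₀) = h x :=
  rfl

end Cond

theorem embedding_dense_general {L₀ L : FirstOrder.Language.{u, u}} (φ : L₀ →ᴸ L)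
    (hrel : ComplementRelational φ)
    (lam : Cardinal.{u})
    (K : Set (CategoryTheory.Bundled.{u} L.Structure))
    (hK : IsStrongFraisseClass K) (hbdd : IsBounded K lam)
    (M₀ : Type u) [L₀.Structure M₀]
    (hM₀ : SatisfiesFraisseTheory (KBot φ K) M₀ lam)
    (A : CategoryTheory.Bundled.{u} L.Structure) (hA : A ∈ K)
    (C : Cond φ M₀) (hC : C.bundled ∈ K) :
    ∃ B : Cond φ M₀, B.bundled ∈ K ∧ C.le B ∧
      Nonempty (@FirstOrder.Language.Embedding L A B.carrier A.str B.str) := by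
  obtain ⟨E, hE, ⟨f⟩, ⟨g⟩⟩ := hK.jep C.bundled hC A hA
  obtain ⟨j, hj⟩ := C.exists_reduct_subtype
  obtain ⟨h, hh⟩ := exists_reduct_embedding_extension hrel hbdd hM₀ hC hE f j
  let e := Cond.equivOfReductEmbedding h
  refine ⟨Cond.ofReductEmbedding h, hK.isoClosed E _ ⟨e⟩ hE,
    ⟨(e.toEmbedding.comp f : C.bundled ↪[L] _), fun v => ?_⟩, ⟨e.toEmbedding.comp g⟩⟩
  exact (Cond.coe_equivOfReductEmbedding h (f v)).trans ((hh v).trans (hj v))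

/-- If `K` is a `λ`-bounded strong Fraïssé class with `K↾L₀` strong Fraïssé
and the extended strong amalgamation property over `L₀`, and `M₀` satisfies the semantic
`λ`-Fraïssé theory of `K↾L₀`, then for every `A ∈ K` the set `D_A` of conditions into which
`A` embeds is dense in `Fn_{M₀}(K, λ)`: every `C ∈ K[M₀]` has an extension `B ∈ K[M₀]` into
which `A` embeds. -/
theorem embedding_dense {L₀ L : FirstOrder.Language.{u, u}} (φ : L₀ →ᴸ L)
    (hsub : φ.Injective) (hrel : ComplementRelational φ)
    (lam : Cardinal.{u})
    (K : Set (CategoryTheory.Bundled.{u} L.Structure))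
    (hK : IsStrongFraisseClass K) (hbdd : IsBounded K lam)
    (hKbot : IsStrongFraisseClass (KBot φ K))
    (hesap : ExtendedSAP φ K)
    (M₀ : Type u) [L₀.Structure M₀]
    (hM₀ : SatisfiesFraisseTheory (KBot φ K) M₀ lam)
    (A : CategoryTheory.Bundled.{u} L.Structure) (hA : A ∈ K)
    (C : Cond φ M₀) (hC : C.bundled ∈ K) :
    ∃ B : Cond φ M₀, B.bundled ∈ K ∧ C.le B ∧
      Nonempty (@FirstOrder.Language.Embedding L A B.carrier A.str B.str) :=
  embedding_dense_general φ hrel lam K hK hbdd M₀ hM₀ A hA C hC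

end
end
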